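/- Let q be a prime power and let l_1 and l_2 be distinct odd primes coprime to q. If all monic irreducible factors of x^{l_1} − 1 and of x^{l_2} − 1 over F_{q^2} are SCRIM and gcd(ord_{l_1}(q^2), ord_{l_2}(q^2)) = 1, then the number of SCRIM factors of x^{l_1 l_2} − 1 over F_{q^2} satisfies |Ω_{q^2,l_1 l_2}| = |Ω_{q^2,l_1}| · |Ω_{q^2,l_2}|. -/

import Mathlib

open Polynomial

/-- The reciprocal polynomial `f*(x) = x^(deg f) * f(0)⁻¹ * f(1/x)`. -/
noncomputable def crecip {F : Type*} [Field F] (f : F[X]) : F[X] :=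
  C (f.coeff 0)⁻¹ * f.reverse

/-- The conjugate-reciprocal polynomial `f†`, obtained by applying the
conjugation `a ↦ a ^ q` to each coefficient of `f*`. -/
noncomputable def cdagger {F : Type*} [Field F] (q : ℕ) (f : F[X]) : F[X] :=
  (crecip f).sum fun i a => C (a ^ q) * X ^ i

/-- A polynomial is SCRIM if it is monic, irreducible, and self-conjugate-reciprocal. -/
def IsSCRIM {F : Type*} [Field F] (q : ℕ) (f : F[X]) : Prop :=
  f.Monic ∧ Irreducible f ∧ f = cdagger q f

/-- The set `Ω_{q²,n}` of SCRIM factors of `x^n - 1` over `F = F_{q²}`. -/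
def scrimFactors (F : Type*) [Field F] (q n : ℕ) : Set F[X] :=
  {f | IsSCRIM q f ∧ f ∣ X ^ n - 1}

/-!
Let `K` be an algebraic closure of `F = 𝔽_{q²}`. The monic irreducible factors of `X ^ n - 1` are
the minimal polynomials of the `n`-th roots of unity in `K`, and two of these have the same minimal
polynomial iff they lie in one orbit of `ζ ↦ ζ ^ q²`. The minimal polynomial of `ζ` is SCRIM iff
`ζ⁻¹ ^ q` is such a conjugate of `ζ`.

As `l₁` and `l₂` are coprime, `ζ ↦ (ζ ^ l₂, ζ ^ l₁)` identifies `μ_{l₁ l₂}` with `μ_{l₁} × μ_{l₂}`.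
As the orders of `q²` modulo `l₁` and `l₂` are coprime, the Chinese remainder theorem lets one
merge the Frobenius exponents of the two components, so `ζ` and `η` are conjugate iff both
components are. Hence the conjugacy classes of `μ_{l₁ l₂}` are the products of those of `μ_{l₁}`
and `μ_{l₂}`, and `ζ⁻¹ ^ q ∼ ζ` on `μ_{l₁ l₂}` follows componentwise, i.e. every irreducible factor
of `X ^ (l₁ l₂) - 1` is SCRIM.
-/

namespace Set

variable {α β γ : Type*}

theorem ncard_image_eq_of_forall_eq_iff {s : Set α} {f : α → β} {g : α → γ}
    (h : ∀ a ∈ s, ∀ b ∈ s, f a = f b ↔ g a = g b) : (f '' s).ncard = (g '' s).ncard := by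
  have hfst : InjOn Prod.fst ((fun a => (f a, g a)) '' s) := by
    rintro _ ⟨a, ha, rfl⟩ _ ⟨b, hb, rfl⟩ hab
    simp_all
  have hsnd : InjOn Prod.snd ((fun a => (f a, g a)) '' s) := by
    rintro _ ⟨a, ha, rfl⟩ _ ⟨b, hb, rfl⟩ hab
    simp_all
  calc (f '' s).ncard = (Prod.fst '' ((fun a => (f a, g a)) '' s)).ncard := by rw [image_image]
    _ = (Prod.snd '' ((fun a => (f a, g a)) '' s)).ncard := by
      rw [hfst.ncard_image, hsnd.ncard_image]
    _ = (g '' s).ncard := by rw [image_image]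

theorem ncard_image_eq_mul_of_image_eq_prod {β₁ β₂ γ₁ γ₂ : Type*} {s : Set α} {s₁ : Set β₁}
    {s₂ : Set β₂} {π : α → β₁ × β₂} (hπ : π '' s = s₁ ×ˢ s₂) {g : α → γ} {g₁ : β₁ → γ₁}
    {g₂ : β₂ → γ₂}
    (hg : ∀ a ∈ s, ∀ b ∈ s, g a = g b ↔ g₁ (π a).1 = g₁ (π b).1 ∧ g₂ (π a).2 = g₂ (π b).2) :
    (g '' s).ncard = (g₁ '' s₁).ncard * (g₂ '' s₂).ncard := by
  rw [ncard_image_eq_of_forall_eq_iff (g := Prod.map g₁ g₂ ∘ π) (by simpa [Prod.ext_iff] using hg),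
    image_comp, hπ, prodMap_image_prod, ncard_prod]

end Set

theorem pow_pow_eq_pow_pow_of_modEq_orderOf {M : Type*} [Monoid M] {l Q a b : ℕ} {x : M}
    (hx : x ^ l = 1) (h : a ≡ b [MOD orderOf (Q : ZMod l)]) : x ^ Q ^ a = x ^ Q ^ b := by
  have hQ : ((Q ^ a : ℕ) : ZMod l) = ((Q ^ b : ℕ) : ZMod l) := by
    push_cast
    exact pow_eq_pow_of_modEq h (pow_orderOf_eq_one _)
  exact pow_eq_pow_of_modEq ((ZMod.natCast_eq_natCast_iff _ _ _).mp hQ) hx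

section CommGroup

variable {G : Type*} [CommGroup G] {m n : ℕ}

theorem eq_of_pow_eq_of_pow_eq (h : m.Coprime n) {x y : G} (hm : x ^ m = y ^ m)
    (hn : x ^ n = y ^ n) : x = y := by
  have hgcd : (x / y) ^ m.gcd n = 1 :=
    pow_gcd_eq_one.mpr ⟨by rw [div_pow, hm, div_self'], by rw [div_pow, hn, div_self']⟩
  rwa [h.gcd_eq_one, pow_one, div_eq_one] at hgcd

theorem exists_pow_eq_and_pow_eq (h : m.Coprime n) {x y : G} (hx : x ^ m = 1)
    (hy : y ^ n = 1) : ∃ z : G, z ^ n = x ∧ z ^ m = y := by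
  obtain ⟨u, v, huv⟩ := Nat.isCoprime_iff_coprime.mpr h
  rw [← zpow_natCast] at hx hy
  have hx' : x ^ (v * n) = x := calc
    x ^ (v * n) = (x ^ (m : ℤ)) ^ u * x ^ (v * n) := by rw [hx, one_zpow, one_mul]
    _ = x := by rw [← zpow_mul, mul_comm _ u, ← zpow_add, huv, zpow_one]
  have hy' : y ^ (u * m) = y := calc
    y ^ (u * m) = y ^ (u * m) * (y ^ (n : ℤ)) ^ v := by rw [hy, one_zpow, mul_one]
    _ = y := by rw [← zpow_mul, mul_comm _ v, ← zpow_add, huv, zpow_one]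
  refine ⟨x ^ v * y ^ u, ?_, ?_⟩
  · rw [← zpow_natCast, mul_zpow, ← zpow_mul, ← zpow_mul, hx', mul_comm u, zpow_mul, hy,
      one_zpow, mul_one]
  · rw [← zpow_natCast, mul_zpow, ← zpow_mul, ← zpow_mul, hy', mul_comm v, zpow_mul, hx,
      one_zpow, one_mul]

theorem exists_eq_pow_pow_of_coprime_orderOf {l₁ l₂ Q : ℕ} (hl : l₁.Coprime l₂)
    (hord : (orderOf (Q : ZMod l₁)).Coprime (orderOf (Q : ZMod l₂))) {x y : G}
    (hx : x ^ (l₁ * l₂) = 1) {i j : ℕ} (hi : y ^ l₂ = (x ^ l₂) ^ Q ^ i)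
    (hj : y ^ l₁ = (x ^ l₁) ^ Q ^ j) : ∃ c, y = x ^ Q ^ c := by
  obtain ⟨c, hc₁, hc₂⟩ := Nat.chineseRemainder hord i j
  have hx₁ : (x ^ l₂) ^ l₁ = 1 := by rw [← pow_mul, mul_comm, hx]
  have hx₂ : (x ^ l₁) ^ l₂ = 1 := by rw [← pow_mul, hx]
  refine ⟨c, eq_of_pow_eq_of_pow_eq hl ?_ ?_⟩
  · rw [hj, pow_pow_eq_pow_pow_of_modEq_orderOf hx₂ hc₂.symm, pow_right_comm]
  · rw [hi, pow_pow_eq_pow_pow_of_modEq_orderOf hx₁ hc₁.symm, pow_right_comm]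

end CommGroup

theorem image_rootsOfUnity_mul {M : Type*} [CommMonoid M] {m n : ℕ} (h : m.Coprime n) :
    (fun ζ => (ζ ^ n, ζ ^ m)) '' (rootsOfUnity (m * n) M : Set Mˣ) =
      (rootsOfUnity m M : Set Mˣ) ×ˢ (rootsOfUnity n M : Set Mˣ) := by
  ext ⟨x, y⟩
  simp only [Set.mem_image, SetLike.mem_coe, mem_rootsOfUnity, Set.mem_prod, Prod.mk.injEq]
  constructor
  · rintro ⟨ζ, hζ, rfl, rfl⟩
    exact ⟨by rw [← pow_mul, mul_comm, hζ], by rw [← pow_mul, hζ]⟩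
  · rintro ⟨hx, hy⟩
    obtain ⟨z, rfl, rfl⟩ := exists_pow_eq_and_pow_eq h hx hy
    exact ⟨z, by rw [pow_mul, hy], rfl, rfl⟩

namespace FiniteField

open IntermediateField

variable {F K : Type*} [Field F] [Fintype F] [Field K] [Algebra F K]

theorem minpoly_pow_card_pow (x : K) (j : ℕ) :
    minpoly F (x ^ Fintype.card F ^ j) = minpoly F x := by
  have h := minpoly.algHom_eq (frobeniusAlgHom F K ^ j) (RingHom.injective _) x
  rwa [AlgHom.coe_pow, coe_frobeniusAlgHom, pow_iterate] at h

theorem exists_eq_pow_card_pow_of_minpoly_eq [Normal F K] {x y : K}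
    (h : minpoly F x = minpoly F y) : ∃ j, y = x ^ Fintype.card F ^ j := by
  obtain ⟨σ, rfl⟩ := (Normal.minpoly_eq_iff_mem_orbit K).mp h.symm
  have : FiniteDimensional F F⟮x⟯ := adjoin.finiteDimensional (Algebra.IsIntegral.isIntegral x)
  have : Finite F⟮x⟯ := Module.finite_of_finite F
  -- `σ` need not be a power of Frobenius on `K`, but it is one on the finite field `F⟮x⟯`.
  obtain ⟨j, hj⟩ := (bijective_frobeniusAlgEquivOfAlgebraic_pow F F⟮x⟯).2 (σ.restrictNormal F⟮x⟯)
  refine ⟨j, ?_⟩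
  have h := σ.restrictNormal_commutes F⟮x⟯ (AdjoinSimple.gen F x)
  rw [← hj, AlgEquiv.coe_pow, coe_frobeniusAlgEquivOfAlgebraic, pow_iterate] at h
  simpa using h.symm

theorem minpoly_eq_iff_exists_eq_pow_card_pow [Normal F K] {x y : K} :
    minpoly F x = minpoly F y ↔ ∃ j, y = x ^ Fintype.card F ^ j :=
  ⟨exists_eq_pow_card_pow_of_minpoly_eq, fun ⟨j, hj⟩ => hj ▸ (minpoly_pow_card_pow x j).symm⟩

end FiniteField

section Conjugation

variable {F K : Type*} [Field F] [Field K] [Algebra F K] (p k : ℕ) [ExpChar F p] [ExpChar K p]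

theorem cdagger_eq_map (f : F[X]) :
    cdagger (p ^ k) f = (crecip f).map (iterateFrobenius F p k) := by
  rw [cdagger, map, eval₂_eq_sum]
  simp [iterateFrobenius_def]

theorem monic_crecip {f : F[X]} (h0 : f.coeff 0 ≠ 0) : (crecip f).Monic := by
  have htd : f.natTrailingDegree = 0 := natTrailingDegree_eq_zero.mpr (Or.inr h0)
  rw [Monic, crecip, leadingCoeff_mul, leadingCoeff_C, reverse_leadingCoeff, trailingCoeff, htd,
    inv_mul_cancel₀ h0]

theorem natDegree_crecip {f : F[X]} (h0 : f.coeff 0 ≠ 0) :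
    (crecip f).natDegree = f.natDegree := by
  rw [crecip, natDegree_C_mul (inv_ne_zero h0), reverse_natDegree,
    natTrailingDegree_eq_zero.mpr (Or.inr h0), Nat.sub_zero]

theorem aeval_inv_pow_cdagger_eq_zero {t : K} (ht : t ≠ 0) {f : F[X]} (hf : aeval t f = 0) :
    aeval (t⁻¹ ^ p ^ k) (cdagger (p ^ k) f) = 0 := by
  have : Invertible t := invertibleOfNonzero ht
  have hrev : aeval t⁻¹ (reverse f) = 0 := by
    simpa [aeval_def] using (eval₂_reverse_eq_zero_iff (algebraMap F K) t f).mpr hf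
  have hcomm : (algebraMap F K).comp (iterateFrobenius F p k) =
      (iterateFrobenius K p k).comp (algebraMap F K) := by
    ext a
    simp [iterateFrobenius_def]
  rw [cdagger_eq_map, aeval_def, eval₂_map, hcomm, ← iterateFrobenius_def, ← hom_eval₂,
    ← aeval_def, crecip, map_mul, hrev, mul_zero, map_zero]

theorem isSCRIM_minpoly_iff {ζ : K} (hζ : IsIntegral F ζ) (h0 : ζ ≠ 0) :
    IsSCRIM (p ^ k) (minpoly F ζ) ↔ minpoly F (ζ⁻¹ ^ p ^ k) = minpoly F ζ := by
  have hroot := aeval_inv_pow_cdagger_eq_zero p k h0 (minpoly.aeval F ζ)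
  constructor
  · rintro ⟨hmon, hirr, hf⟩
    rw [← hf] at hroot
    exact (minpoly.eq_of_irreducible_of_monic hirr hroot hmon).symm
  · intro h
    refine ⟨minpoly.monic hζ, minpoly.irreducible hζ, ?_⟩
    have hc0 := minpoly.coeff_zero_ne_zero hζ h0
    have hmon : (cdagger (p ^ k) (minpoly F ζ)).Monic := by
      rw [cdagger_eq_map]
      exact (monic_crecip hc0).map _
    have hdeg : (cdagger (p ^ k) (minpoly F ζ)).natDegree = (minpoly F ζ).natDegree := by
      rw [cdagger_eq_map, natDegree_map_eq_of_injective (RingHom.injective _),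
        natDegree_crecip hc0]
    have hdvd : minpoly F ζ ∣ cdagger (p ^ k) (minpoly F ζ) := by
      simpa only [h] using minpoly.dvd F (ζ⁻¹ ^ p ^ k) hroot
    exact (eq_of_monic_of_dvd_of_natDegree_le (minpoly.monic hζ) hmon hdvd hdeg.le).symm

end Conjugation

section RootsOfUnity

variable {F : Type*} [Field F]

theorem setOf_monic_irreducible_dvd_X_pow_sub_one_eq_image (K : Type*) [Field K] [Algebra F K]
    [IsAlgClosed K] {n : ℕ} (hn : n ≠ 0) :
    {f : F[X] | f.Monic ∧ Irreducible f ∧ f ∣ X ^ n - 1} =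
      (fun ζ : Kˣ => minpoly F (ζ : K)) '' rootsOfUnity n K := by
  ext f
  constructor
  · rintro ⟨hmon, hirr, hdvd⟩
    obtain ⟨z, hz⟩ := IsAlgClosed.exists_aeval_eq_zero K f (degree_pos_of_irreducible hirr).ne'
    have hzn : z ^ n = 1 := by
      simpa [sub_eq_zero] using aeval_eq_zero_of_dvd_aeval_eq_zero hdvd hz
    have hz0 : z ≠ 0 := by
      rintro rfl
      simp [hn] at hzn
    refine ⟨Units.mk0 z hz0, (mem_rootsOfUnity _ _).mpr (Units.ext (by simpa using hzn)), ?_⟩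
    exact (minpoly.eq_of_irreducible_of_monic hirr hz hmon).symm
  · rintro ⟨ζ, hζ, rfl⟩
    have hζ' : (ζ : K) ^ n = 1 := by
      simpa using congrArg Units.val ((mem_rootsOfUnity _ _).mp hζ)
    have hint : IsIntegral F (ζ : K) := .of_pow (Nat.pos_of_ne_zero hn) (hζ' ▸ isIntegral_one)
    exact ⟨minpoly.monic hint, minpoly.irreducible hint, minpoly.dvd F _ (by simp [hζ'])⟩

theorem scrimFactors_eq_image_minpoly (K : Type*) [Field K] [Algebra F K] [IsAlgClosed K]
    {q n : ℕ} (hn : n ≠ 0)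
    (hall : ∀ f : F[X], f.Monic → Irreducible f → f ∣ X ^ n - 1 → IsSCRIM q f) :
    scrimFactors F q n = (fun ζ : Kˣ => minpoly F (ζ : K)) '' rootsOfUnity n K := by
  rw [← setOf_monic_irreducible_dvd_X_pow_sub_one_eq_image K hn]
  ext f
  exact ⟨fun ⟨hf, hdvd⟩ => ⟨hf.1, hf.2.1, hdvd⟩,
    fun ⟨hmon, hirr, hdvd⟩ => ⟨hall f hmon hirr hdvd, hdvd⟩⟩

theorem minpoly_inv_pow_eq_of_forall_isSCRIM (K : Type*) [Field K] [Algebra F K] [IsAlgClosed K]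
    [Algebra.IsIntegral F K] (p k : ℕ) [ExpChar F p] [ExpChar K p] {l : ℕ} (hl : l ≠ 0)
    (hall : ∀ f : F[X], f.Monic → Irreducible f → f ∣ X ^ l - 1 → IsSCRIM (p ^ k) f)
    {ζ : Kˣ} (hζ : ζ ∈ rootsOfUnity l K) :
    minpoly F ((ζ⁻¹ ^ p ^ k : Kˣ) : K) = minpoly F (ζ : K) := by
  obtain ⟨hmon, hirr, hdvd⟩ :
      minpoly F (ζ : K) ∈ {f : F[X] | f.Monic ∧ Irreducible f ∧ f ∣ X ^ l - 1} := by
    rw [setOf_monic_irreducible_dvd_X_pow_sub_one_eq_image K hl]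
    exact ⟨ζ, hζ, rfl⟩
  rw [Units.val_pow_eq_pow_val, Units.val_inv_eq_inv_val,
    ← isSCRIM_minpoly_iff p k (Algebra.IsIntegral.isIntegral _) ζ.ne_zero]
  exact hall _ hmon hirr hdvd

variable {K : Type*} [Field K] [Algebra F K] [Fintype F] [Normal F K]

theorem minpoly_val_eq_iff_exists_eq_pow_card_pow {x y : Kˣ} :
    minpoly F (x : K) = minpoly F (y : K) ↔ ∃ j, y = x ^ Fintype.card F ^ j := by
  simp only [FiniteField.minpoly_eq_iff_exists_eq_pow_card_pow, Units.ext_iff,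
    Units.val_pow_eq_pow_val]

theorem minpoly_eq_iff_of_coprime_orderOf {l₁ l₂ : ℕ} (hl : l₁.Coprime l₂)
    (hord : (orderOf (Fintype.card F : ZMod l₁)).Coprime (orderOf (Fintype.card F : ZMod l₂)))
    {ζ η : Kˣ} (hζ : ζ ^ (l₁ * l₂) = 1) :
    minpoly F (ζ : K) = minpoly F (η : K) ↔
      minpoly F ((ζ ^ l₂ : Kˣ) : K) = minpoly F ((η ^ l₂ : Kˣ) : K) ∧
        minpoly F ((ζ ^ l₁ : Kˣ) : K) = minpoly F ((η ^ l₁ : Kˣ) : K) := by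
  simp only [minpoly_val_eq_iff_exists_eq_pow_card_pow]
  constructor
  · rintro ⟨j, rfl⟩
    exact ⟨⟨j, pow_right_comm _ _ _⟩, ⟨j, pow_right_comm _ _ _⟩⟩
  · rintro ⟨⟨i, hi⟩, ⟨j, hj⟩⟩
    exact exists_eq_pow_pow_of_coprime_orderOf hl hord hζ hi hj

theorem ncard_image_minpoly_rootsOfUnity_mul {l₁ l₂ : ℕ} (hl : l₁.Coprime l₂)
    (hord : (orderOf (Fintype.card F : ZMod l₁)).Coprime (orderOf (Fintype.card F : ZMod l₂))) :
    ((fun ζ : Kˣ => minpoly F (ζ : K)) '' rootsOfUnity (l₁ * l₂) K).ncard =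
      ((fun ζ : Kˣ => minpoly F (ζ : K)) '' rootsOfUnity l₁ K).ncard *
        ((fun ζ : Kˣ => minpoly F (ζ : K)) '' rootsOfUnity l₂ K).ncard :=
  Set.ncard_image_eq_mul_of_image_eq_prod (image_rootsOfUnity_mul hl)
    fun _ hζ _ _ => minpoly_eq_iff_of_coprime_orderOf hl hord hζ

end RootsOfUnity

theorem isSCRIM_of_dvd_X_pow_mul_sub_one {F : Type*} [Field F] [Fintype F] {p k l₁ l₂ : ℕ}
    [Fact p.Prime] [CharP F p] (hl : l₁.Coprime l₂) (hl₁ : l₁ ≠ 0) (hl₂ : l₂ ≠ 0)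
    (hord : (orderOf (Fintype.card F : ZMod l₁)).Coprime (orderOf (Fintype.card F : ZMod l₂)))
    (hall₁ : ∀ f : F[X], f.Monic → Irreducible f → f ∣ X ^ l₁ - 1 → IsSCRIM (p ^ k) f)
    (hall₂ : ∀ f : F[X], f.Monic → Irreducible f → f ∣ X ^ l₂ - 1 → IsSCRIM (p ^ k) f)
    {f : F[X]} (hmon : f.Monic) (hirr : Irreducible f) (hdvd : f ∣ X ^ (l₁ * l₂) - 1) :
    IsSCRIM (p ^ k) f := by
  let K := AlgebraicClosure F
  obtain ⟨ζ, hζ, rfl⟩ : f ∈ (fun ζ : Kˣ => minpoly F (ζ : K)) '' rootsOfUnity (l₁ * l₂) K := by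
    rw [← setOf_monic_irreducible_dvd_X_pow_sub_one_eq_image K (mul_ne_zero hl₁ hl₂)]
    exact ⟨hmon, hirr, hdvd⟩
  rw [SetLike.mem_coe, mem_rootsOfUnity] at hζ
  rw [isSCRIM_minpoly_iff p k (Algebra.IsIntegral.isIntegral _) ζ.ne_zero,
    ← Units.val_inv_eq_inv_val, ← Units.val_pow_eq_pow_val, eq_comm,
    minpoly_eq_iff_of_coprime_orderOf hl hord hζ, pow_right_comm, inv_pow, pow_right_comm, inv_pow]
  exact ⟨(minpoly_inv_pow_eq_of_forall_isSCRIM K p k hl₁ hall₁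
      ((mem_rootsOfUnity _ _).mpr (by rw [← pow_mul, mul_comm, hζ]))).symm,
    (minpoly_inv_pow_eq_of_forall_isSCRIM K p k hl₂ hall₂
      ((mem_rootsOfUnity _ _).mpr (by rw [← pow_mul, hζ]))).symm⟩

theorem stmt10_general {q l₁ l₂ : ℕ} (hq : IsPrimePow q)
    {F : Type*} [Field F] [Fintype F] (hF : Fintype.card F = q ^ 2)
    (hl₁ : l₁.Prime) (hl₂ : l₂.Prime)
    (hne : l₁ ≠ l₂)
    (hall₁ : ∀ f : F[X], f.Monic → Irreducible f → f ∣ X ^ l₁ - 1 → IsSCRIM q f)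
    (hall₂ : ∀ f : F[X], f.Monic → Irreducible f → f ∣ X ^ l₂ - 1 → IsSCRIM q f)
    (hord : Nat.Coprime (orderOf ((q : ZMod l₁) ^ 2)) (orderOf ((q : ZMod l₂) ^ 2))) :
    (scrimFactors F q (l₁ * l₂)).ncard =
      (scrimFactors F q l₁).ncard * (scrimFactors F q l₂).ncard := by
  obtain ⟨p, k, hp, -, rfl⟩ := hq
  have : Fact p.Prime := ⟨hp.nat_prime⟩
  have : CharP F p := charP_of_card_eq_prime_pow (hF.trans (pow_mul p k 2).symm)
  have hl : l₁.Coprime l₂ := (Nat.coprime_primes hl₁ hl₂).mpr hne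
  have hord' :
      (orderOf (Fintype.card F : ZMod l₁)).Coprime (orderOf (Fintype.card F : ZMod l₂)) := by
    simpa [hF] using hord
  have hall : ∀ f : F[X], f.Monic → Irreducible f → f ∣ X ^ (l₁ * l₂) - 1 → IsSCRIM (p ^ k) f :=
    fun _ => isSCRIM_of_dvd_X_pow_mul_sub_one hl hl₁.ne_zero hl₂.ne_zero hord' hall₁ hall₂
  rw [scrimFactors_eq_image_minpoly (AlgebraicClosure F) (mul_ne_zero hl₁.ne_zero hl₂.ne_zero) hall,
    scrimFactors_eq_image_minpoly (AlgebraicClosure F) hl₁.ne_zero hall₁,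
    scrimFactors_eq_image_minpoly (AlgebraicClosure F) hl₂.ne_zero hall₂]
  exact ncard_image_minpoly_rootsOfUnity_mul hl hord'

theorem stmt10 {q l₁ l₂ : ℕ} (hq : IsPrimePow q)
    {F : Type*} [Field F] [Fintype F] (hF : Fintype.card F = q ^ 2)
    (hl₁ : l₁.Prime) (hl₂ : l₂.Prime) (hodd₁ : Odd l₁) (hodd₂ : Odd l₂)
    (hne : l₁ ≠ l₂) (h1q : Nat.Coprime l₁ q) (h2q : Nat.Coprime l₂ q)
    (hall₁ : ∀ f : F[X], f.Monic → Irreducible f → f ∣ X ^ l₁ - 1 → IsSCRIM q f)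
    (hall₂ : ∀ f : F[X], f.Monic → Irreducible f → f ∣ X ^ l₂ - 1 → IsSCRIM q f)
    (hord : Nat.Coprime (orderOf ((q : ZMod l₁) ^ 2)) (orderOf ((q : ZMod l₂) ^ 2))) :
    (scrimFactors F q (l₁ * l₂)).ncard =
      (scrimFactors F q l₁).ncard * (scrimFactors F q l₂).ncard :=
  stmt10_general hq hF hl₁ hl₂ hne hall₁ hall₂ hord
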